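/- arXiv:2303.17382 — 2 statements merged into one kernel-verified Lean document; each statement's English description precedes it below -/
import Mathlib

section
/- Let (X,T) be a subshift of {0,1}^ℤ such that for every x ∈ X, every k ∈ ℤ and every n ≥ 1, the word x(k)x(k+1)⋯x(k+4·3^n) contains a block of 2n−1 consecutive 1's. Then for every ergodic T-invariant Borel probability measure μ and every n ≥ 1, μ(Î_n) ≥ 1/(4·3^n), where Î_n = { x ∈ X : x(k) = 1 for all −n+1 ≤ k ≤ n−1 }. -/
/-!
If every window of length `4·3ⁿ + 1` contains `2n − 1` consecutive 1's, then the centre of such a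
block in the window `[1 − n, 1 − n + 4·3ⁿ]` is a time `m < 4·3ⁿ` (when `n ≥ 2`) at which the orbit
lies in the cylinder `C_n` of 1's on `[−(n−1), n−1]`. So every point of `X` visits `C_n` at least
once in `4·3ⁿ` steps. Integrating the number of visits against the invariant measure `μ` gives
`μ X ≤ 4·3ⁿ μ(C_n)` (Markov's inequality), and `μ(Î_n) = μ(X ∩ C_n) = μ(C_n)` since `μ X = 1`.
For `n = 1` the same argument runs with 4 visits in 37 steps.
-/

open MeasureTheory
open scoped ENNReal

/-- The cylinder `Î_n` of points with 1's in all coordinates `−(n−1), …, n−1`. -/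
def Ihat (X : Set (ℤ → Bool)) (n : ℕ) : Set (ℤ → Bool) :=
  {x ∈ X | ∀ k : ℤ, -((n : ℤ) - 1) ≤ k → k ≤ (n : ℤ) - 1 → x k = true}

open Finset

section VisitCount

variable {α : Type*} {T : α → α} {A : Set α}

open Classical in
noncomputable def visitCount (T : α → α) (A : Set α) (L : ℕ) (x : α) : ℕ :=
  #{m ∈ range L | T^[m] x ∈ A}

lemma card_le_visitCount {L : ℕ} {x : α} {S : Finset ℕ} (hS : S ⊆ range L)
    (hSA : ∀ m ∈ S, T^[m] x ∈ A) : #S ≤ visitCount T A L x := by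
  classical
  exact card_le_card fun m hm => by simp [hS hm, hSA m hm]

lemma visitCount_eq_sum_indicator (L : ℕ) (x : α) :
    (visitCount T A L x : ℝ≥0∞) = ∑ m ∈ range L, (T^[m] ⁻¹' A).indicator 1 x := by
  classical
  rw [visitCount, natCast_card_filter]
  exact sum_congr rfl fun m _ => by rw [Set.indicator_apply, Set.mem_preimage, Pi.one_apply]

variable [MeasurableSpace α] {μ : Measure α}

lemma MeasureTheory.MeasurePreserving.lintegral_visitCount (hT : MeasurePreserving T μ μ)
    (hA : MeasurableSet A) (L : ℕ) :
    ∫⁻ x, (visitCount T A L x : ℝ≥0∞) ∂μ = L * μ A := by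
  have hmeas (m : ℕ) : MeasurableSet (T^[m] ⁻¹' A) := (hT.iterate m).measurable hA
  simp_rw [visitCount_eq_sum_indicator]
  rw [lintegral_finsetSum _ fun m _ => measurable_one.indicator (hmeas m)]
  simp_rw [lintegral_indicator_one (hmeas _),
    (hT.iterate _).measure_preimage hA.nullMeasurableSet]
  simp

lemma MeasureTheory.MeasurePreserving.mul_measure_le_of_le_visitCount
    (hT : MeasurePreserving T μ μ) (hA : MeasurableSet A) {X : Set α} {c L : ℕ}
    (h : ∀ x ∈ X, c ≤ visitCount T A L x) :
    c * μ X ≤ L * μ A := by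
  have hmeas : Measurable fun x => (visitCount T A L x : ℝ≥0∞) := by
    simp_rw [visitCount_eq_sum_indicator]
    exact Finset.measurable_sum _ fun m _ =>
      measurable_one.indicator ((hT.iterate m).measurable hA)
  calc (c : ℝ≥0∞) * μ X ≤ c * μ {x | (c : ℝ≥0∞) ≤ visitCount T A L x} := by
        gcongr
        exact fun x hx => by exact_mod_cast h x hx
    _ ≤ ∫⁻ x, (visitCount T A L x : ℝ≥0∞) ∂μ := mul_meas_ge_le_lintegral₀ hmeas.aemeasurable _
    _ = L * μ A := hT.lintegral_visitCount hA L

end VisitCount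

def onesCylinder (n : ℕ) : Set (ℤ → Bool) :=
  {x | ∀ k : ℤ, -((n : ℤ) - 1) ≤ k → k ≤ (n : ℤ) - 1 → x k = true}

lemma Ihat_eq_inter_onesCylinder (X : Set (ℤ → Bool)) (n : ℕ) :
    Ihat X n = X ∩ onesCylinder n :=
  rfl

lemma measurableSet_onesCylinder (n : ℕ) : MeasurableSet (onesCylinder n) := by
  have : onesCylinder n =
      ⋂ k ∈ Set.Icc (-((n : ℤ) - 1)) ((n : ℤ) - 1), (fun x => x k) ⁻¹' {true} := by
    ext x
    simp [onesCylinder]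
  rw [this]
  exact MeasurableSet.biInter (Set.to_countable _) fun k _ =>
    measurable_pi_apply k (measurableSet_singleton true)

def OnesBlockInWindow (x : ℤ → Bool) (k : ℤ) (n : ℕ) : Prop :=
  ∃ j : ℤ, k ≤ j ∧ j + (2 * (n : ℤ) - 2) ≤ k + 4 * 3 ^ n ∧
    ∀ i : ℤ, 0 ≤ i → i ≤ 2 * (n : ℤ) - 2 → x (j + i) = true

section Shift

variable {T : (ℤ → Bool) → (ℤ → Bool)}

lemma iterate_apply_of_shift (hT : ∀ x k, T x k = x (k + 1)) (m : ℕ) (x : ℤ → Bool) (k : ℤ) :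
    T^[m] x k = x (k + m) := by
  induction m generalizing x with
  | zero => simp
  | succ m ih =>
    rw [Function.iterate_succ_apply, ih, hT]
    push_cast
    ring_nf

lemma iterate_mem_onesCylinder (hT : ∀ x k, T x k = x (k + 1)) {n m : ℕ} {j : ℤ}
    {x : ℤ → Bool} (hm : (m : ℤ) = j + n - 1)
    (hones : ∀ i : ℤ, 0 ≤ i → i ≤ 2 * (n : ℤ) - 2 → x (j + i) = true) :
    T^[m] x ∈ onesCylinder n := by
  intro k hk₁ hk₂
  rw [iterate_apply_of_shift hT, hm, show k + (j + n - 1) = j + (k + n - 1) by ring]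
  exact hones _ (by omega) (by omega)

lemma iterate_mem_onesCylinder_one_iff (hT : ∀ x k, T x k = x (k + 1)) {m : ℕ}
    {x : ℤ → Bool} : T^[m] x ∈ onesCylinder 1 ↔ x m = true := by
  constructor
  · intro h
    simpa [iterate_apply_of_shift hT] using h 0 (by simp) (by simp)
  · intro h k hk₁ hk₂
    obtain rfl : k = 0 := by simp at hk₁ hk₂; omega
    simpa [iterate_apply_of_shift hT] using h

lemma one_le_visitCount_onesCylinder (hT : ∀ x k, T x k = x (k + 1)) {n : ℕ} (hn : 2 ≤ n)
    {x : ℤ → Bool} (hx : OnesBlockInWindow x (1 - n) n) :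
    1 ≤ visitCount T (onesCylinder n) (4 * 3 ^ n) x := by
  obtain ⟨j, hj₁, hj₂, hones⟩ := hx
  lift j + n - 1 to ℕ using (by omega) with m hm
  refine card_le_visitCount (S := {m}) ?_ ?_
  · have hm_lt : (m : ℤ) < 4 * 3 ^ n := by omega
    simpa using (by exact_mod_cast hm_lt : m < 4 * 3 ^ n)
  · simpa using iterate_mem_onesCylinder hT hm hones

lemma OnesBlockInWindow.exists_eq_true {x : ℤ → Bool} {k : ℤ} (h : OnesBlockInWindow x k 1) :
    ∃ j : ℤ, k ≤ j ∧ j ≤ k + 12 ∧ x j = true := by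
  obtain ⟨j, hj₁, hj₂, hones⟩ := h
  exact ⟨j, hj₁, by norm_num at hj₂; omega, by simpa using hones 0 le_rfl (by norm_num)⟩

/-- For `n = 1` one window yields only the bound `1/13`; instead, three consecutive 1's from a
window of length 37 and one more from a disjoint window of length 13 give 4 visits in 37 steps,
and `4/37 ≥ 1/12`. -/
lemma four_le_visitCount_onesCylinder_one (hT : ∀ x k, T x k = x (k + 1)) {x : ℤ → Bool}
    (h₁ : ∀ k, OnesBlockInWindow x k 1) (h₂ : OnesBlockInWindow x 0 2) :
    4 ≤ visitCount T (onesCylinder 1) 37 x := by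
  obtain ⟨j, hj₀, hj₂, hones⟩ := h₂
  norm_num at hj₂
  lift j to ℕ using hj₀
  obtain ⟨b, hb_lt, hb_out, hb⟩ : ∃ b : ℕ, b < 37 ∧ (b < j ∨ j + 2 < b) ∧ x b = true := by
    obtain ⟨b, hb₁, hb₂, hb⟩ := (h₁ (if j ≤ 12 then j + 3 else 0)).exists_eq_true
    lift b to ℕ using by split_ifs at hb₁ <;> omega
    refine ⟨b, ?_, ?_, hb⟩ <;> split_ifs at hb₁ hb₂ <;> omega
  have hcard : #(insert b (Icc j (j + 2))) = 4 := by
    rw [card_insert_of_notMem (by simp only [mem_Icc]; omega), Nat.card_Icc]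
    omega
  rw [← hcard]
  refine card_le_visitCount (fun m hm => ?_) fun m hm => ?_
  · simp only [mem_insert, mem_Icc, mem_range] at hm ⊢
    omega
  · rw [iterate_mem_onesCylinder_one_iff hT]
    simp only [mem_insert, mem_Icc] at hm
    rcases hm with rfl | ⟨hm₁, hm₂⟩
    · exact hb
    · simpa using hones (m - j) (by omega) (by omega)

end Shift

theorem measure_Ihat_lower_bound_general
    (T : (ℤ → Bool) → (ℤ → Bool)) (hT : ∀ x k, T x k = x (k + 1))
    (X : Set (ℤ → Bool))
    (hblock : ∀ x ∈ X, ∀ k : ℤ, ∀ n : ℕ, 1 ≤ n →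
      ∃ j : ℤ, k ≤ j ∧ j + (2 * (n : ℤ) - 2) ≤ k + 4 * 3 ^ n ∧
        ∀ i : ℤ, 0 ≤ i → i ≤ 2 * (n : ℤ) - 2 → x (j + i) = true)
    (μ : Measure (ℤ → Bool)) [IsProbabilityMeasure μ]
    (hμX : μ X = 1) (herg : Ergodic T μ) :
    ∀ n : ℕ, 1 ≤ n → 1 / (4 * 3 ^ n : ℝ≥0∞) ≤ μ (Ihat X n) := by
  intro n hn
  obtain ⟨c, L, hc, hL, hvisit⟩ : ∃ c L : ℕ, c ≠ 0 ∧ L ≤ c * (4 * 3 ^ n) ∧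
      ∀ x ∈ X, c ≤ visitCount T (onesCylinder n) L x := by
    rcases hn.eq_or_lt with rfl | hn
    · exact ⟨4, 37, by norm_num, by norm_num, fun x hx =>
        four_le_visitCount_onesCylinder_one hT (fun k => hblock x hx k 1 le_rfl)
          (hblock x hx 0 2 (by norm_num))⟩
    · exact ⟨1, 4 * 3 ^ n, one_ne_zero, by rw [one_mul], fun x hx =>
        one_le_visitCount_onesCylinder hT hn (hblock x hx _ n hn.le)⟩
  have hC := measurableSet_onesCylinder n
  have hvisits := herg.toMeasurePreserving.mul_measure_le_of_le_visitCount hC hvisit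
  have hμC : μ (Ihat X n) = μ (onesCylinder n) := by
    rw [Ihat_eq_inter_onesCylinder, Measure.measure_inter_eq_of_measure_eq hC
      (hμX.trans measure_univ.symm) (Set.subset_univ X) (by simp [hμX]), Set.univ_inter]
  rw [hμC]
  refine ENNReal.div_le_of_le_mul' ((ENNReal.mul_le_mul_iff_right (by exact_mod_cast hc)
    (ENNReal.natCast_ne_top c)).1 ?_)
  calc (c : ℝ≥0∞) * 1 = c * μ X := by rw [hμX]
    _ ≤ L * μ (onesCylinder n) := hvisits
    _ ≤ ((c * (4 * 3 ^ n) : ℕ) : ℝ≥0∞) * μ (onesCylinder n) := by gcongr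
    _ = c * (4 * 3 ^ n * μ (onesCylinder n)) := by push_cast; ring

/-- if every window of length `4·3ⁿ + 1` of every point of the subshift `X`
contains a block of `2n − 1` consecutive 1's, then every ergodic shift-invariant Borel
probability measure `μ` carried by `X` satisfies `μ(Î_n) ≥ 1/(4·3ⁿ)`. -/
theorem measure_Ihat_lower_bound
    (T : (ℤ → Bool) → (ℤ → Bool)) (hT : ∀ x k, T x k = x (k + 1))
    (X : Set (ℤ → Bool)) (hXclosed : IsClosed X) (hXinv : T '' X = X)
    (hblock : ∀ x ∈ X, ∀ k : ℤ, ∀ n : ℕ, 1 ≤ n →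
      ∃ j : ℤ, k ≤ j ∧ j + (2 * (n : ℤ) - 2) ≤ k + 4 * 3 ^ n ∧
        ∀ i : ℤ, 0 ≤ i → i ≤ 2 * (n : ℤ) - 2 → x (j + i) = true)
    (μ : Measure (ℤ → Bool)) [IsProbabilityMeasure μ]
    (hμX : μ X = 1) (herg : Ergodic T μ) :
    ∀ n : ℕ, 1 ≤ n → 1 / (4 * 3 ^ n : ℝ≥0∞) ≤ μ (Ihat X n) :=
  measure_Ihat_lower_bound_general T hT X hblock μ hμX herg
end

section
/- In the Ohno construction, the roof function γ defined by γ(x) = n·4·3^n for x ∈ Î_n \ Î_{n+1} (n ≥ 1) and γ(x) = 1 for x ∈ X_* \ Î_1 satisfies E_μ(γ) = ∫ γ dμ = +∞ for every non-trivial ergodic T-invariant measure μ, because E_μ(γ) > n·4·3^n · μ(Î_n) > n for every n, using μ(Î_n) ≥ 1/(4·3^n). -/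
/-!
Ergodicity makes the fixed point `1` a null set for any non-trivial ergodic `μ`. Every other point
of `Î_n` has a coordinate `0`, so it lies in a layer `Î_m \ Î_{m+1}` with `m ≥ n`, where
`γ = m·4·3^m ≥ n·4·3^n`. Hence `∫ γ dμ ≥ n·4·3^n · μ(Î_n) ≥ n` for every `n ≥ 1`.
-/

open MeasureTheory
open scoped ENNReal

theorem measurableSet_Ihat {X : Set (ℤ → Bool)} (hX : MeasurableSet X) (n : ℕ) :
    MeasurableSet (Ihat X n) := by
  refine hX.inter <| measurableSet_setOfPred.2 <| .forall fun k => .imp measurable_const <|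
    .imp measurable_const ?_
  exact measurableSet_setOfPred.1 <| measurableSet_eq_fun (measurable_pi_apply k) measurable_const

theorem Ergodic.measure_singleton_eq_zero {α : Type*} [MeasurableSpace α]
    [MeasurableSingletonClass α] {T : α → α} {μ : Measure α} [IsProbabilityMeasure μ]
    (hT : Ergodic T μ) {a : α} (ha : T ⁻¹' {a} = {a}) (hμ : μ ≠ Measure.dirac a) :
    μ {a} = 0 := by
  refine (hT.measure_self_or_compl_eq_zero (measurableSet_singleton a) ha).resolve_right
    fun h => hμ ?_
  have h1 : μ {a} = 1 := (prob_compl_eq_zero_iff (measurableSet_singleton a)).1 h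
  have hae : ∀ᵐ x ∂μ, x ∈ ({a} : Finset α) := by
    simpa using measure_eq_zero_iff_ae_notMem.1 h
  simpa [h1] using Measure.ae_mem_finset_iff.1 hae

theorem preimage_shift_const {β : Type*} {T : (ℤ → β) → (ℤ → β)}
    (hT : ∀ x k, T x k = x (k + 1)) (b : β) : T ⁻¹' {fun _ => b} = {fun _ => b} := by
  ext x
  simp only [Set.mem_preimage, Set.mem_singleton_iff, funext_iff, hT]
  exact ⟨fun h k => by simpa using h (k - 1), fun h k => h (k + 1)⟩

theorem eventually_notMem_Ihat {X : Set (ℤ → Bool)} {x : ℤ → Bool} (hx : x ≠ fun _ => true) :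
    ∀ᶠ N in Filter.atTop, x ∉ Ihat X N := by
  obtain ⟨k, hk⟩ : ∃ k, x k ≠ true := by simpa [funext_iff] using hx
  filter_upwards [Filter.eventually_ge_atTop (k.natAbs + 1)] with N hN h
  exact hk (h.2 k (by omega) (by omega))

theorem le_roof_of_mem_Ihat {X : Set (ℤ → Bool)} {γ : (ℤ → Bool) → ℝ≥0∞}
    {f : ℕ → ℝ≥0∞} (hf : Monotone f)
    (hγ : ∀ n : ℕ, 1 ≤ n → ∀ x ∈ Ihat X n \ Ihat X (n + 1), γ x = f n)
    {n : ℕ} (hn : 1 ≤ n) {x : ℤ → Bool} (hx : x ∈ Ihat X n) (hx1 : x ≠ fun _ => true) :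
    f n ≤ γ x := by
  obtain ⟨N, hN⟩ := (eventually_notMem_Ihat (X := X) hx1).exists_forall_of_atTop
  obtain ⟨j, hj, hj1⟩ := Nat.exists_not_and_succ_of_not_zero_of_exists
    (p := fun j => x ∉ Ihat X (n + j)) (by simpa using hx) ⟨N, hN _ (Nat.le_add_left N n)⟩
  rw [hγ (n + j) (by omega) x ⟨not_not.1 hj, hj1⟩]
  exact hf (Nat.le_add_right n j)

theorem const_mul_measure_le_lintegral {α : Type*} [MeasurableSpace α] {μ : Measure α}
    {s : Set α} (hs : MeasurableSet s) {c : ℝ≥0∞} {f : α → ℝ≥0∞}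
    (h : ∀ᵐ x ∂μ, x ∈ s → c ≤ f x) : c * μ s ≤ ∫⁻ x, f x ∂μ :=
  calc c * μ s = ∫⁻ _ in s, c ∂μ := (setLIntegral_const s c).symm
    _ ≤ ∫⁻ x in s, f x ∂μ := setLIntegral_mono_ae' hs h
    _ ≤ ∫⁻ x, f x ∂μ := setLIntegral_le_lintegral s f

theorem ohno_roof_integral_infinite_general
    (T : (ℤ → Bool) → (ℤ → Bool)) (hT : ∀ x k, T x k = x (k + 1))
    (X : Set (ℤ → Bool)) (hXclosed : IsClosed X)
    (μ : Measure (ℤ → Bool)) [IsProbabilityMeasure μ]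
    (herg : Ergodic T μ)
    (hnontriv : μ ≠ Measure.dirac (fun _ => true))
    (hbound : ∀ n : ℕ, 1 ≤ n → 1 / (4 * 3 ^ n : ℝ≥0∞) ≤ μ (Ihat X n))
    (γ : (ℤ → Bool) → ℝ≥0∞)
    (hγ : ∀ n : ℕ, 1 ≤ n → ∀ x ∈ Ihat X n \ Ihat X (n + 1),
      γ x = ((n : ℝ≥0∞) * 4 * 3 ^ n)) :
    (∀ n : ℕ, 1 ≤ n → (n : ℝ≥0∞) ≤ ∫⁻ x, γ x ∂μ) ∧ ∫⁻ x, γ x ∂μ = ∞ := by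
  have hμ1 : μ {fun _ => true} = 0 :=
    herg.measure_singleton_eq_zero (preimage_shift_const hT true) hnontriv
  have hmono : Monotone fun n : ℕ => (n : ℝ≥0∞) * 4 * 3 ^ n := fun a b hab => by
    dsimp only; gcongr; norm_num
  have key (n : ℕ) (hn : 1 ≤ n) : (n : ℝ≥0∞) ≤ ∫⁻ x, γ x ∂μ :=
    calc (n : ℝ≥0∞) = n * (4 * 3 ^ n) * (4 * 3 ^ n)⁻¹ := by
          rw [mul_assoc, ENNReal.mul_inv_cancel (by positivity) (by finiteness), mul_one]
      _ ≤ n * 4 * 3 ^ n * μ (Ihat X n) := by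
          rw [← mul_assoc, ← one_div]; gcongr; exact hbound n hn
      _ ≤ ∫⁻ x, γ x ∂μ := const_mul_measure_le_lintegral
          (measurableSet_Ihat hXclosed.measurableSet n) <|
          (measure_eq_zero_iff_ae_notMem.1 hμ1).mono fun x hx1 hx =>
            le_roof_of_mem_Ihat hmono hγ hn hx hx1
  refine ⟨key, ?_⟩
  rw [eq_top_iff, ← ENNReal.iSup_natCast]
  exact iSup_le fun n => (Nat.cast_le.2 n.le_succ).trans (key (n + 1) n.succ_pos)

/-- the Ohno roof function `γ` (equal to `n·4·3ⁿ` on `Î_n \ Î_{n+1}` and to `1`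
off `Î_1`) has infinite integral with respect to every non-trivial ergodic shift-invariant
measure `μ`, since `∫ γ dμ ≥ n·4·3ⁿ·μ(Î_n) ≥ n` for every `n`. -/
theorem ohno_roof_integral_infinite
    (T : (ℤ → Bool) → (ℤ → Bool)) (hT : ∀ x k, T x k = x (k + 1))
    (X : Set (ℤ → Bool)) (hXclosed : IsClosed X) (hXinv : T '' X = X)
    (μ : Measure (ℤ → Bool)) [IsProbabilityMeasure μ]
    (hμX : μ X = 1) (herg : Ergodic T μ)
    (hnontriv : μ ≠ Measure.dirac (fun _ => true))
    (hbound : ∀ n : ℕ, 1 ≤ n → 1 / (4 * 3 ^ n : ℝ≥0∞) ≤ μ (Ihat X n))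
    (γ : (ℤ → Bool) → ℝ≥0∞)
    (hγ : ∀ n : ℕ, 1 ≤ n → ∀ x ∈ Ihat X n \ Ihat X (n + 1),
      γ x = ((n : ℝ≥0∞) * 4 * 3 ^ n))
    (hγ' : ∀ x ∈ X \ Ihat X 1, γ x = 1) :
    (∀ n : ℕ, 1 ≤ n → (n : ℝ≥0∞) ≤ ∫⁻ x, γ x ∂μ) ∧ ∫⁻ x, γ x ∂μ = ∞ :=
  ohno_roof_integral_infinite_general T hT X hXclosed μ herg hnontriv hbound γ hγ
end
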